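/- Let d ≥ 3 be an integer, a_c = (d−2)/2, and let (a,b) ∈ ℝ² satisfy a ≤ b < a+1 and a < a_c. Set n = d/(1+a−b) and α = (a_c−a)(a+1−b)/(a_c−a+b), so α > 0. Define g(x) = tanh(α ln|x|) for x ∈ ℝ^d∖{0}. Then g is an eigenfunction of the generator of the spherical CKN space with eigenvalue nα²: for every x ∈ ℝ^d∖{0}, |x|^{2(1−α)} ((1+|x|^{2α})²/4) [ Δg(x) − (2a/|x|²) x·∇g(x) − (n−2) (2α|x|^{2α−2}/(1+|x|^{2α})) x·∇g(x) ] = −nα² g(x), where Δ is the Euclidean Laplacian and ∇ the Euclidean gradient. -/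

import Mathlib

open MeasureTheory Real
open scoped RealInnerProductSpace

/-- The Euclidean Laplacian of a function on `EuclideanSpace ℝ (Fin d)`. -/
noncomputable def euclideanLaplacian {d : ℕ} (u : EuclideanSpace ℝ (Fin d) → ℝ)
    (x : EuclideanSpace ℝ (Fin d)) : ℝ :=
  ∑ i : Fin d, fderiv ℝ (fun y => fderiv ℝ u y (EuclideanSpace.single i 1)) x
    (EuclideanSpace.single i 1)

/-!
Write `g x = φ (‖x‖ ^ 2)` with `φ t = tanh (α / 2 * log t)`. For such radial functions
`Δg = 4 t φ''(t) + 2 d φ'(t)` and `⟪x, ∇g⟫ = 2 t φ'(t)` at `t = ‖x‖ ^ 2`. With `T = tanh (α log ‖x‖)`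
one has `φ' = α (1 - T²) / (2t)`, the prefactor of the generator equals `‖x‖² / (1 - T²)` and
`2α ‖x‖^(2α-2) / (1 + ‖x‖^(2α)) = α (1 + T) / ‖x‖²`, because `T = (‖x‖^(2α) - 1) / (‖x‖^(2α) + 1)`.
The bracket then collapses to `-n α² T (1 - T²) / ‖x‖²` by the relation `(n - 2) α = d - 2 - 2a`
between the parameters.
-/

open Filter Topology

theorem Real.hasDerivAt_tanh (x : ℝ) : HasDerivAt tanh (1 - tanh x ^ 2) x := by
  have h := (hasDerivAt_sinh x).div (hasDerivAt_cosh x) (cosh_pos x).ne'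
  rw [show sinh / cosh = tanh from funext fun y => (tanh_eq_sinh_div_cosh y).symm] at h
  refine h.congr_deriv ?_
  have hcosh : cosh x ≠ 0 := (cosh_pos x).ne'
  rw [tanh_eq_sinh_div_cosh]
  field_simp

theorem Real.tanh_mul_log_eq_rpow {r : ℝ} (hr : 0 < r) (α : ℝ) :
    tanh (α * log r) = (r ^ (2 * α) - 1) / (r ^ (2 * α) + 1) := by
  have hexp : r ^ (2 * α) = exp (α * log r) ^ 2 := by
    rw [rpow_def_of_pos hr, ← exp_nat_mul]; ring_nf
  have hpos := exp_pos (α * log r)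
  rw [tanh_eq, hexp, exp_neg]
  field_simp

section RadialProfile

variable {E : Type*} [NormedAddCommGroup E] [InnerProductSpace ℝ E]
  {φ φ' : ℝ → ℝ} {ψ ψ' : ℝ} {x : E}

theorem hasFDerivAt_comp_norm_sq (hφ : HasDerivAt φ ψ (‖x‖ ^ 2)) :
    HasFDerivAt (fun y : E => φ (‖y‖ ^ 2)) ((2 * ψ) • innerSL ℝ x) x :=
  (hφ.comp_hasFDerivAt x (hasStrictFDerivAt_norm_sq x).hasFDerivAt).congr_fderiv <| by
    ext v; simp; ring

theorem hasGradientAt_comp_norm_sq [CompleteSpace E] (hφ : HasDerivAt φ ψ (‖x‖ ^ 2)) :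
    HasGradientAt (fun y : E => φ (‖y‖ ^ 2)) ((2 * ψ) • x) x := by
  rw [hasGradientAt_iff_hasFDerivAt]
  exact (hasFDerivAt_comp_norm_sq hφ).congr_fderiv <| by
    ext v; simp

theorem fderiv_fderiv_comp_norm_sq_apply (hφ : ∀ᶠ s in 𝓝 (‖x‖ ^ 2), HasDerivAt φ (φ' s) s)
    (hφ' : HasDerivAt φ' ψ' (‖x‖ ^ 2)) (v : E) :
    fderiv ℝ (fun y => fderiv ℝ (fun z : E => φ (‖z‖ ^ 2)) y v) x v
      = 4 * ψ' * ⟪x, v⟫ ^ 2 + 2 * φ' (‖x‖ ^ 2) * ‖v‖ ^ 2 := by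
  have hnear : ∀ᶠ y in 𝓝 x, HasDerivAt φ (φ' (‖y‖ ^ 2)) (‖y‖ ^ 2) :=
    ((continuous_norm.pow 2).tendsto x).eventually hφ
  have hfirst : (fun y => fderiv ℝ (fun z : E => φ (‖z‖ ^ 2)) y v)
      =ᶠ[𝓝 x] fun y => 2 * φ' (‖y‖ ^ 2) * innerSL ℝ v y := by
    filter_upwards [hnear] with y hy
    simp [(hasFDerivAt_comp_norm_sq hy).fderiv, real_inner_comm]
  have hsecond : HasFDerivAt (fun y => 2 * φ' (‖y‖ ^ 2) * innerSL ℝ v y) _ x :=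
    ((hasFDerivAt_comp_norm_sq hφ').const_mul 2).mul (innerSL ℝ v).hasFDerivAt
  rw [hfirst.fderiv_eq, hsecond.fderiv]
  simp [real_inner_comm]
  ring

end RadialProfile

theorem euclideanLaplacian_comp_norm_sq {d : ℕ} {φ φ' : ℝ → ℝ} {ψ' : ℝ}
    {x : EuclideanSpace ℝ (Fin d)} (hφ : ∀ᶠ s in 𝓝 (‖x‖ ^ 2), HasDerivAt φ (φ' s) s)
    (hφ' : HasDerivAt φ' ψ' (‖x‖ ^ 2)) :
    euclideanLaplacian (fun y => φ (‖y‖ ^ 2)) x = 4 * ψ' * ‖x‖ ^ 2 + 2 * d * φ' (‖x‖ ^ 2) := by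
  simp_rw [euclideanLaplacian, fderiv_fderiv_comp_norm_sq_apply hφ hφ',
    EuclideanSpace.inner_single_right, PiLp.norm_single, Finset.sum_add_distrib, ← Finset.mul_sum,
    EuclideanSpace.norm_sq_eq]
  simp
  ring

section TanhLogProfile

variable {β s : ℝ}

theorem hasDerivAt_tanh_mul_log (hs : 0 < s) :
    HasDerivAt (fun t => tanh (β * log t)) (β / s * (1 - tanh (β * log s) ^ 2)) s := by
  have h := (hasDerivAt_tanh (β * log s)).comp s ((hasDerivAt_log hs.ne').const_mul β)
  exact h.congr_deriv (by field_simp)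

theorem hasDerivAt_deriv_tanh_mul_log (hs : 0 < s) :
    HasDerivAt (fun t => β / t * (1 - tanh (β * log t) ^ 2))
      (-(β / s ^ 2) * (1 - tanh (β * log s) ^ 2) * (1 + 2 * β * tanh (β * log s))) s := by
  have h := ((hasDerivAt_const s β).div (hasDerivAt_id s) hs.ne').mul
    (((hasDerivAt_tanh_mul_log (β := β) hs).pow 2).const_sub 1)
  exact h.congr_deriv (by simp; field_simp; ring)

end TanhLogProfile

theorem ckn_exponent_mul_sub_two (d a b : ℝ) (hb : 1 + a - b ≠ 0) (hc : (d - 2) / 2 - a + b ≠ 0) :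
    (d / (1 + a - b) - 2) * (((d - 2) / 2 - a) * (a + 1 - b) / ((d - 2) / 2 - a + b))
      = d - 2 - 2 * a := by
  have hn : d / (1 + a - b) - 2 = 2 * ((d - 2) / 2 - a + b) / (1 + a - b) := by
    field_simp; ring
  rw [hn, div_mul_div_comm, div_eq_iff (mul_ne_zero hb hc)]
  ring

theorem spherical_ckn_eigenfunction_general (d : ℕ) (hd : 3 ≤ d) (a b n α : ℝ)
    (hab : a ≤ b) (hba : b < a + 1)
    (hn : n = (d : ℝ) / (1 + a - b))
    (hα : α = (((d : ℝ) - 2) / 2 - a) * (a + 1 - b) / (((d : ℝ) - 2) / 2 - a + b))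
    (g : EuclideanSpace ℝ (Fin d) → ℝ)
    (hg : ∀ x, g x = Real.tanh (α * Real.log ‖x‖)) :
    ∀ x : EuclideanSpace ℝ (Fin d), x ≠ 0 →
      ‖x‖ ^ (2 * (1 - α)) * ((1 + ‖x‖ ^ (2 * α)) ^ 2 / 4) *
          (euclideanLaplacian g x - 2 * a / ‖x‖ ^ 2 * ⟪x, gradient g x⟫
            - (n - 2) * (2 * α * ‖x‖ ^ (2 * α - 2) / (1 + ‖x‖ ^ (2 * α))) *
              ⟪x, gradient g x⟫) =
        -(n * α ^ 2) * g x := by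
  intro x hx
  have hr : 0 < ‖x‖ := norm_pos_iff.mpr hx
  have ht : 0 < ‖x‖ ^ 2 := by positivity
  have hd' : (3 : ℝ) ≤ d := by exact_mod_cast hd
  have hexp : (n - 2) * α = d - 2 - 2 * a := by
    rw [hn, hα]; exact ckn_exponent_mul_sub_two d a b (by linarith) (by linarith)
  have hg' : g = fun y => tanh (α / 2 * log (‖y‖ ^ 2)) := by
    ext y; rw [hg, log_pow]; ring_nf
  have hφ : ∀ᶠ s in 𝓝 (‖x‖ ^ 2), HasDerivAt (fun t => tanh (α / 2 * log t))
      (α / 2 / s * (1 - tanh (α / 2 * log s) ^ 2)) s :=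
    (lt_mem_nhds ht).mono fun s hs => hasDerivAt_tanh_mul_log hs
  have hT : tanh (α / 2 * log (‖x‖ ^ 2)) = (‖x‖ ^ (2 * α) - 1) / (‖x‖ ^ (2 * α) + 1) := by
    rw [log_pow, ← tanh_mul_log_eq_rpow hr]; push_cast; ring_nf
  rw [hg', euclideanLaplacian_comp_norm_sq hφ (hasDerivAt_deriv_tanh_mul_log ht),
    (hasGradientAt_comp_norm_sq (hasDerivAt_tanh_mul_log ht)).gradient, real_inner_smul_right,
    real_inner_self_eq_norm_sq]
  beta_reduce
  rw [hT, show 2 * (1 - α) = 2 - 2 * α by ring, rpow_sub hr, rpow_sub hr, rpow_two]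
  have hX : 0 < ‖x‖ ^ (2 * α) := rpow_pos_of_pos hr _
  rw [show (d : ℝ) = (n - 2) * α + 2 + 2 * a by linarith]
  field_simp
  ring

/-- g(x) = tanh(α ln|x|) is an eigenfunction of the generator of the spherical
CKN space with eigenvalue nα². -/
theorem spherical_ckn_eigenfunction (d : ℕ) (hd : 3 ≤ d) (a b n α : ℝ)
    (hab : a ≤ b) (hba : b < a + 1) (ha : a < ((d : ℝ) - 2) / 2)
    (hn : n = (d : ℝ) / (1 + a - b))
    (hα : α = (((d : ℝ) - 2) / 2 - a) * (a + 1 - b) / (((d : ℝ) - 2) / 2 - a + b))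
    (g : EuclideanSpace ℝ (Fin d) → ℝ)
    (hg : ∀ x, g x = Real.tanh (α * Real.log ‖x‖)) :
    ∀ x : EuclideanSpace ℝ (Fin d), x ≠ 0 →
      ‖x‖ ^ (2 * (1 - α)) * ((1 + ‖x‖ ^ (2 * α)) ^ 2 / 4) *
          (euclideanLaplacian g x - 2 * a / ‖x‖ ^ 2 * ⟪x, gradient g x⟫
            - (n - 2) * (2 * α * ‖x‖ ^ (2 * α - 2) / (1 + ‖x‖ ^ (2 * α))) *
              ⟪x, gradient g x⟫) =
        -(n * α ^ 2) * g x :=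
  spherical_ckn_eigenfunction_general d hd a b n α hab hba hn hα g hg
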